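/- arXiv:2009.01506 — 7 statements merged into one kernel-verified Lean document; each statement's English description precedes it below -/
import Mathlib

section
/- For every real δ with 0 < |δ| < 1/√(12α), setting s := √(1 − 12δ²α), one has 1 − 6δ²η_*(δ)² = s > 0, and for all complex numbers λ and ν the identity d_{c_*(δ)}(λ, −η_*(δ) + ν) = −δ²ν⁴ + 4η_*(δ)δ²ν³ + s·ν² − λ holds. In particular, ν = −η_*(δ) is a root of multiplicity exactly two of the polynomial ν ↦ d_{c_*(δ)}(0, ν). -/
/-! `η_*` is the double root: in terms of `η`, the parameters are `c = 2η - 4δ²η³` and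
`α = η² - 3δ²η⁴`, so that the quartic `-δ²ν⁴ + ν² + cν + α` expanded around `ν = -η` loses its
constant and linear terms, while its quadratic coefficient is `1 - 6δ²η²`. The choice of `η_*`
makes this coefficient equal to `√(1 - 12δ²α)`, which is positive below the threshold on `|δ|`. -/

noncomputable def etaStar (α δ : ℝ) : ℝ :=
  if δ = 0 then Real.sqrt α
  else 1 / (|δ| * Real.sqrt 6) * Real.sqrt (1 - Real.sqrt (1 - 12 * δ ^ 2 * α))

noncomputable def cStar (α δ : ℝ) : ℝ :=
  2 * etaStar α δ - 4 * δ ^ 2 * etaStar α δ ^ 3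

/-- The dispersion relation at `+∞`: `d_c(λ, ν) = -δ²ν⁴ + ν² + cν + α - λ`. -/
noncomputable def disp (α δ c : ℝ) (lam ν : ℂ) : ℂ :=
  -(δ : ℂ) ^ 2 * ν ^ 4 + ν ^ 2 + (c : ℂ) * ν + (α : ℂ) - lam

open Polynomial

section Quartic

variable {R : Type*} [CommRing R] {δ η c a : R}

theorem quartic_shift_eq (ha : a = η ^ 2 - 3 * δ ^ 2 * η ^ 4) (hc : c = 2 * η - 4 * δ ^ 2 * η ^ 3)
    (ν : R) :
    -δ ^ 2 * (-η + ν) ^ 4 + (-η + ν) ^ 2 + c * (-η + ν) + a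
      = -δ ^ 2 * ν ^ 4 + 4 * η * δ ^ 2 * ν ^ 3 + (1 - 6 * δ ^ 2 * η ^ 2) * ν ^ 2 := by
  subst ha hc
  ring

theorem quartic_eq_mul_X_sub_C_sq (ha : a = η ^ 2 - 3 * δ ^ 2 * η ^ 4)
    (hc : c = 2 * η - 4 * δ ^ 2 * η ^ 3) :
    C (-δ ^ 2) * X ^ 4 + X ^ 2 + C c * X + C a
      = (C (-δ ^ 2) * X ^ 2 + C (2 * δ ^ 2 * η) * X + C (1 - 3 * δ ^ 2 * η ^ 2))
        * (X - C (-η)) ^ 2 := by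
  subst ha hc
  simp only [map_sub, map_mul, map_pow, map_neg, map_ofNat, map_one]
  ring

theorem rootMultiplicity_mul_X_sub_C_pow_of_eval_ne_zero {p : R[X]} {x : R} (hp : p.eval x ≠ 0)
    (n : ℕ) : (p * (X - C x) ^ n).rootMultiplicity x = n := by
  have hp0 : p ≠ 0 := fun h ↦ hp (by simp [h])
  rw [rootMultiplicity_mul_X_sub_C_pow hp0, rootMultiplicity_eq_zero hp, zero_add]

theorem rootMultiplicity_quartic_neg_eq_two (ha : a = η ^ 2 - 3 * δ ^ 2 * η ^ 4)
    (hc : c = 2 * η - 4 * δ ^ 2 * η ^ 3) (hs : 1 - 6 * δ ^ 2 * η ^ 2 ≠ 0) :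
    (C (-δ ^ 2) * X ^ 4 + X ^ 2 + C c * X + C a).rootMultiplicity (-η) = 2 := by
  rw [quartic_eq_mul_X_sub_C_sq ha hc]
  refine rootMultiplicity_mul_X_sub_C_pow_of_eval_ne_zero ?_ 2
  convert hs using 1
  simp only [eval_add, eval_mul, eval_pow, eval_C, eval_X]
  ring

end Quartic

section EtaStar

variable {α : ℝ}

theorem six_mul_sq_mul_etaStar_sq (hα : 0 ≤ α) (δ : ℝ) :
    6 * δ ^ 2 * etaStar α δ ^ 2 = 1 - Real.sqrt (1 - 12 * δ ^ 2 * α) := by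
  rcases eq_or_ne δ 0 with rfl | hδ
  · simp
  have hs : Real.sqrt (1 - 12 * δ ^ 2 * α) ≤ 1 :=
    Real.sqrt_le_one.mpr (by nlinarith [sq_nonneg δ])
  rw [etaStar, if_neg hδ, mul_pow, div_pow, mul_pow, sq_abs, Real.sq_sqrt (by norm_num : (0:ℝ) ≤ 6),
    Real.sq_sqrt (by linarith)]
  field_simp

theorem etaStar_sq_sub_eq (hα : 0 ≤ α) {δ : ℝ} (h : 12 * δ ^ 2 * α ≤ 1) :
    etaStar α δ ^ 2 - 3 * δ ^ 2 * etaStar α δ ^ 4 = α := by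
  rcases eq_or_ne δ 0 with rfl | hδ
  · simp [etaStar, Real.sq_sqrt hα]
  have hη := six_mul_sq_mul_etaStar_sq hα δ
  have hs := Real.sq_sqrt (by linarith : 0 ≤ 1 - 12 * δ ^ 2 * α)
  -- squaring `√(1 - 12δ²α) = 1 - 6δ²η²` gives `12δ²α = 12δ²(η² - 3δ²η⁴)`
  have : δ ^ 2 * (etaStar α δ ^ 2 - 3 * δ ^ 2 * etaStar α δ ^ 4) = δ ^ 2 * α := by
    linear_combination
      (-hs + (Real.sqrt (1 - 12 * δ ^ 2 * α) + 1 - 6 * δ ^ 2 * etaStar α δ ^ 2) * hη) / 12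
  exact mul_left_cancel₀ (pow_ne_zero 2 hδ) this

theorem twelve_mul_sq_mul_lt_one (hα : 0 < α) {δ : ℝ} (h : |δ| < 1 / Real.sqrt (12 * α)) :
    12 * δ ^ 2 * α < 1 := by
  rw [lt_div_iff₀ (by positivity)] at h
  have := pow_lt_one₀ (by positivity) h two_ne_zero
  rwa [mul_pow, sq_abs, Real.sq_sqrt (by positivity), ← mul_assoc, mul_comm _ 12] at this

end EtaStar

theorem stmt0_general (α : ℝ) (hα : 0 < α) (δ : ℝ)
    (hδ' : |δ| < 1 / Real.sqrt (12 * α)) :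
    (1 - 6 * δ ^ 2 * etaStar α δ ^ 2 = Real.sqrt (1 - 12 * δ ^ 2 * α)
      ∧ 0 < Real.sqrt (1 - 12 * δ ^ 2 * α))
    ∧ (∀ lam ν : ℂ,
        disp α δ (cStar α δ) lam (-(etaStar α δ : ℂ) + ν)
          = -(δ : ℂ) ^ 2 * ν ^ 4 + 4 * (etaStar α δ : ℂ) * (δ : ℂ) ^ 2 * ν ^ 3
            + (Real.sqrt (1 - 12 * δ ^ 2 * α) : ℂ) * ν ^ 2 - lam)
    ∧ Polynomial.rootMultiplicity (-(etaStar α δ : ℂ))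
        (Polynomial.C (-(δ : ℂ) ^ 2) * Polynomial.X ^ 4 + Polynomial.X ^ 2
          + Polynomial.C ((cStar α δ : ℝ) : ℂ) * Polynomial.X
          + Polynomial.C ((α : ℝ) : ℂ)) = 2 := by
  set η := etaStar α δ
  have hlt := twelve_mul_sq_mul_lt_one hα hδ'
  have hsub : 0 < 1 - 12 * δ ^ 2 * α := sub_pos.mpr hlt
  have hs : 1 - 6 * δ ^ 2 * η ^ 2 = Real.sqrt (1 - 12 * δ ^ 2 * α) := by
    linarith [six_mul_sq_mul_etaStar_sq hα.le δ]
  have hsC : 1 - 6 * (δ : ℂ) ^ 2 * (η : ℂ) ^ 2 = (Real.sqrt (1 - 12 * δ ^ 2 * α) : ℂ) := by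
    exact_mod_cast hs
  have hαC : (α : ℂ) = (η : ℂ) ^ 2 - 3 * (δ : ℂ) ^ 2 * (η : ℂ) ^ 4 := by
    exact_mod_cast (etaStar_sq_sub_eq hα.le hlt.le).symm
  have hcC : ((cStar α δ : ℝ) : ℂ) = 2 * (η : ℂ) - 4 * (δ : ℂ) ^ 2 * (η : ℂ) ^ 3 := by
    push_cast [cStar]; rfl
  refine ⟨⟨hs, Real.sqrt_pos.mpr hsub⟩, fun lam ν ↦ ?_, ?_⟩
  · rw [disp, quartic_shift_eq hαC hcC, hsC]
  · refine rootMultiplicity_quartic_neg_eq_two hαC hcC ?_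
    rw [hsC]
    exact_mod_cast (Real.sqrt_pos.mpr hsub).ne'

theorem stmt0 (α : ℝ) (hα : 0 < α) (δ : ℝ) (hδ : 0 < |δ|)
    (hδ' : |δ| < 1 / Real.sqrt (12 * α)) :
    (1 - 6 * δ ^ 2 * etaStar α δ ^ 2 = Real.sqrt (1 - 12 * δ ^ 2 * α)
      ∧ 0 < Real.sqrt (1 - 12 * δ ^ 2 * α))
    ∧ (∀ lam ν : ℂ,
        disp α δ (cStar α δ) lam (-(etaStar α δ : ℂ) + ν)
          = -(δ : ℂ) ^ 2 * ν ^ 4 + 4 * (etaStar α δ : ℂ) * (δ : ℂ) ^ 2 * ν ^ 3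
            + (Real.sqrt (1 - 12 * δ ^ 2 * α) : ℂ) * ν ^ 2 - lam)
    ∧ Polynomial.rootMultiplicity (-(etaStar α δ : ℂ))
        (Polynomial.C (-(δ : ℂ) ^ 2) * Polynomial.X ^ 4 + Polynomial.X ^ 2
          + Polynomial.C ((cStar α δ : ℝ) : ℂ) * Polynomial.X
          + Polynomial.C ((α : ℝ) : ℂ)) = 2 :=
  stmt0_general α hα δ hδ'
end

section
/- (No unstable essential spectrum at +∞.) For every real δ with |δ| < 1/√(12α): if λ ∈ ℂ and k ∈ ℝ satisfy d_{c_*(δ)}(λ, −η_*(δ) + ik) = 0, then Re λ = −δ²k⁴ − √(1 − 12δ²α)·k²; in particular Re λ ≤ 0. -/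
theorem stmt3 (α : ℝ) (hα : 0 < α) (δ : ℝ) (hδ : |δ| < 1 / Real.sqrt (12 * α))
    (lam : ℂ) (k : ℝ)
    (h : disp α δ (cStar α δ) lam (-(etaStar α δ : ℂ) + Complex.I * (k : ℂ)) = 0) :
    lam.re = -δ ^ 2 * k ^ 4 - Real.sqrt (1 - 12 * δ ^ 2 * α) * k ^ 2 ∧ lam.re ≤ 0 := by
  set η := etaStar α δ with hη
  set s := Real.sqrt (1 - 12 * δ ^ 2 * α) with hsdef
  -- 12 δ² α ≤ 1
  have h12 : 12 * δ ^ 2 * α ≤ 1 := by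
    have h12α : (0:ℝ) < 12 * α := by linarith
    have hsq : (0:ℝ) < Real.sqrt (12 * α) := Real.sqrt_pos.mpr h12α
    have : |δ| * Real.sqrt (12 * α) < 1 := by
      rw [div_eq_mul_inv, one_mul] at hδ
      calc |δ| * Real.sqrt (12 * α) < (Real.sqrt (12*α))⁻¹ * Real.sqrt (12*α) := by
            exact mul_lt_mul_of_pos_right hδ hsq
        _ = 1 := by field_simp
    nlinarith [sq_nonneg (|δ| * Real.sqrt (12*α)), Real.sq_sqrt (le_of_lt h12α), sq_abs δ,
      abs_nonneg δ, Real.sqrt_nonneg (12*α), mul_nonneg (abs_nonneg δ) (Real.sqrt_nonneg (12*α))]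
  have h1s : (0:ℝ) ≤ 1 - 12 * δ ^ 2 * α := by linarith
  have hs2 : s ^ 2 = 1 - 12 * δ ^ 2 * α := Real.sq_sqrt h1s
  have hs0 : 0 ≤ s := Real.sqrt_nonneg _
  have hs1 : s ≤ 1 := by
    rw [hsdef]
    calc Real.sqrt (1 - 12 * δ ^ 2 * α) ≤ Real.sqrt 1 :=
          Real.sqrt_le_sqrt (by nlinarith [sq_nonneg δ])
      _ = 1 := Real.sqrt_one
  -- key identity: α = η² (1+s)/2, and 6 δ² η² = 1 - s
  have hkey : 3*δ^2*η^4 + 6*δ^2*η^2*k^2 - η^2 - k^2 + α + s*k^2 = 0 := by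
    by_cases hd : δ = 0
    · have hs1' : s = 1 := by rw [hsdef, hd]; norm_num
      have hη2 : η ^ 2 = α := by
        rw [hη, etaStar, if_pos hd, Real.sq_sqrt hα.le]
      rw [hd, hs1', hη2]; ring
    · have hd2 : (0:ℝ) < δ ^ 2 := by positivity
      have hη2 : 6 * δ ^ 2 * η ^ 2 = 1 - s := by
        rw [hη, etaStar, if_neg hd]
        rw [mul_pow, div_pow, mul_pow, sq_abs, Real.sq_sqrt (by norm_num : (6:ℝ) ≥ 0),
          Real.sq_sqrt (by linarith : (0:ℝ) ≤ 1 - s)]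
        field_simp
      have hα2 : α = η ^ 2 * (1 + s) / 2 := by
        have h12' : 12 * δ ^ 2 * α = 6 * δ ^ 2 * η ^ 2 * (1 + s) := by
          rw [hη2]; nlinarith [hs2]
        refine mul_left_cancel₀ (by positivity : (12 * δ^2 : ℝ) ≠ 0) ?_
        linear_combination h12'
      linear_combination (η^2/2 + k^2) * hη2 + hα2
  -- extract real part
  have hre := congrArg Complex.re h
  simp only [disp, Complex.add_re, Complex.sub_re, Complex.mul_re, Complex.mul_im,
    Complex.neg_re, Complex.neg_im, Complex.ofReal_re, Complex.ofReal_im, Complex.I_re,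
    Complex.I_im, Complex.add_im, Complex.zero_re, pow_succ, pow_zero, Complex.one_re,
    Complex.one_im, mul_one, one_mul] at hre
  have hcs : cStar α δ = 2 * η - 4 * δ ^ 2 * η ^ 3 := rfl
  rw [hcs] at hre
  have hlre : lam.re = -δ ^ 2 * k ^ 4 - s * k ^ 2 := by
    ring_nf at hre ⊢
    linarith [hkey]
  refine ⟨hlre, ?_⟩
  rw [hlre]
  nlinarith [sq_nonneg k, sq_nonneg (k^2), hs0, sq_nonneg δ]
end

section
/- (Expansions of the linear spreading speed and critical decay rate.) There exist δ₀ > 0 and C > 0 such that for all real δ with 0 < |δ| < δ₀: |c_*(δ) − 2√α + α^{3/2}δ²| ≤ Cδ⁴ and |η_*(δ) − √α| ≤ C|δ|; that is, c_*(δ) = 2√α − α^{3/2}δ² + O(δ⁴) and η_*(δ) = √α + O(δ) as δ → 0. -/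
private lemma aux_e_bounds (A s η δ : ℝ) (hA : 0 < A) (hsh : 1/2 < s) (hs1 : s ≤ 1)
    (hη0 : 0 ≤ η)
    (hE : (η - A) * ((η + A) * (1 + s) ^ 2) = 12 * δ ^ 2 * A ^ 4) :
    (0 ≤ η - A ∧ η - A ≤ 6 * A ^ 3 * δ ^ 2) ∧ A * (9/4) ≤ (η + A) * (1 + s) ^ 2 := by
  have hD : 0 < (η + A) * (1 + s) ^ 2 :=
    mul_pos (by linarith) (pow_pos (by linarith) 2)
  have hDlb : A * (9/4) ≤ (η + A) * (1 + s) ^ 2 :=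
    mul_le_mul (by linarith) (by nlinarith) (by norm_num) (by linarith)
  have he0 : 0 ≤ η - A := by nlinarith [sq_nonneg (δ * A ^ 2), hD]
  refine ⟨⟨he0, ?_⟩, hDlb⟩
  nlinarith [mul_le_mul_of_nonneg_left hDlb he0, sq_nonneg (δ * A), sq_nonneg (δ * A ^ 2)]

private lemma aux_D_bounds (A s η δ : ℝ) (hA : 0 < A) (hsh : 1/2 < s) (hs1 : s ≤ 1)
    (hη0 : 0 ≤ η) (hu : 1 - s ≤ 12 * δ ^ 2 * A ^ 2)
    (he0 : 0 ≤ η - A) (heub : η - A ≤ 6 * A ^ 3 * δ ^ 2) :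
    8 * A - 168 * A ^ 3 * δ ^ 2 ≤ (η + A) * (1 + s) ^ 2
      ∧ (η + A) * (1 + s) ^ 2 ≤ 8 * A + 168 * A ^ 3 * δ ^ 2 := by
  constructor
  · nlinarith [mul_nonneg he0 (sq_nonneg (1 + s)),
      mul_nonneg hA.le (mul_nonneg (sub_nonneg.2 hs1) (sub_nonneg.2 hs1)),
      mul_le_mul_of_nonneg_left hu (show (0:ℝ) ≤ 8 * A by linarith), sq_nonneg δ]
  · nlinarith [mul_nonneg he0 (sub_nonneg.2 hs1),
      mul_nonneg (mul_nonneg he0 (sub_nonneg.2 hs1)) (sub_nonneg.2 hs1),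
      mul_le_mul_of_nonneg_left heub (show (0:ℝ) ≤ 4 by norm_num), sq_nonneg δ,
      mul_nonneg hA.le (sub_nonneg.2 hs1)]

set_option maxHeartbeats 1000000 in
private lemma aux_core (A s η δ : ℝ) (hA : 0 < A)
    (hE : (η - A) * ((η + A) * (1 + s) ^ 2) = 12 * δ ^ 2 * A ^ 4)
    (hDlb : A * (9/4) ≤ (η + A) * (1 + s) ^ 2)
    (hDlb2 : 8 * A - 168 * A ^ 3 * δ ^ 2 ≤ (η + A) * (1 + s) ^ 2)
    (hDub : (η + A) * (1 + s) ^ 2 ≤ 8 * A + 168 * A ^ 3 * δ ^ 2)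
    (hδ2' : δ ^ 2 * A ^ 2 ≤ 1/100) :
    2*(η-A) ≤ 3*A^3*δ^2 + 224*A^5*δ^4 ∧ 3*A^3*δ^2 - 224*A^5*δ^4 ≤ 2*(η-A) := by
  constructor
  · nlinarith [mul_le_mul_of_nonneg_left hDlb2
        (show (0:ℝ) ≤ 3*A^3*δ^2 + 224*A^5*δ^4 by positivity),
      mul_le_mul_of_nonneg_right hδ2' (show (0:ℝ) ≤ 37632*A^6*δ^4 by positivity), hDlb]
  · nlinarith [mul_le_mul_of_nonneg_left hDub (show (0:ℝ) ≤ 3*A^3*δ^2 by positivity),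
      mul_le_mul_of_nonneg_left hDlb (show (0:ℝ) ≤ 224*A^5*δ^4 by positivity), hDlb]

set_option maxHeartbeats 1000000 in
private lemma aux_final (A η δ : ℝ) (hA : 0 < A)
    (he0 : 0 ≤ η - A) (heub : η - A ≤ 6 * A ^ 3 * δ ^ 2)
    (hδ2' : δ ^ 2 * A ^ 2 ≤ 1/100)
    (hc1 : 2*(η-A) ≤ 3*A^3*δ^2 + 224*A^5*δ^4)
    (hc2 : 3*A^3*δ^2 - 224*A^5*δ^4 ≤ 2*(η-A)) :
    |2*η - 4*δ^2*η^3 - (2*A - A^3*δ^2)| ≤ (302*A^5 + 12*A^3 + 1) * δ^4 := by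
  have he2 : (η-A)^2 ≤ 36*A^6*δ^4 := by nlinarith
  have he3 : (η-A)^3 ≤ 216*A^9*δ^6 := by
    nlinarith [mul_le_mul heub he2 (sq_nonneg (η-A)) (by positivity)]
  have hx1 : A^7*δ^6 ≤ (1/100)*(A^5*δ^4) := by
    nlinarith [mul_le_mul_of_nonneg_right hδ2' (show (0:ℝ) ≤ A^5*δ^4 by positivity)]
  have hx2 : A^9*δ^8 ≤ (1/100)*(A^7*δ^6) := by
    nlinarith [mul_le_mul_of_nonneg_right hδ2' (show (0:ℝ) ≤ A^7*δ^6 by positivity)]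
  rw [abs_le]
  constructor
  · nlinarith [mul_le_mul_of_nonneg_left heub (show (0:ℝ) ≤ 12*A^2*δ^2 by positivity),
      mul_le_mul_of_nonneg_left he2 (show (0:ℝ) ≤ 12*A*δ^2 by positivity),
      mul_le_mul_of_nonneg_left he3 (show (0:ℝ) ≤ 4*δ^2 by positivity),
      hx1, hx2, sq_nonneg δ, sq_nonneg (δ^2), pow_nonneg hA.le 5, pow_nonneg hA.le 3]
  · nlinarith [mul_nonneg (show (0:ℝ) ≤ 12*A^2*δ^2 by positivity) he0,
      mul_nonneg (show (0:ℝ) ≤ 12*A*δ^2 by positivity) (sq_nonneg (η-A)),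
      mul_nonneg (show (0:ℝ) ≤ 4*δ^2 by positivity) (pow_nonneg he0 3),
      sq_nonneg (δ^2), pow_nonneg hA.le 5, pow_nonneg hA.le 3]

theorem stmt5 (α : ℝ) (hα : 0 < α) :
    ∃ δ₀ > (0 : ℝ), ∃ C > (0 : ℝ), ∀ δ : ℝ, 0 < |δ| → |δ| < δ₀ →
      |cStar α δ - (2 * Real.sqrt α - α ^ ((3 : ℝ) / 2) * δ ^ 2)| ≤ C * δ ^ 4
        ∧ |etaStar α δ - Real.sqrt α| ≤ C * |δ| := by
  set A := Real.sqrt α with hAdef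
  have hA : 0 < A := Real.sqrt_pos.2 hα
  have hA2 : A ^ 2 = α := Real.sq_sqrt hα.le
  clear_value A
  have hpow : α ^ ((3 : ℝ) / 2) = A ^ 3 := by
    rw [hAdef]
    rw [show ((3:ℝ)/2) = ((3:ℕ):ℝ) * (1/2 : ℝ) by norm_num, Real.rpow_mul hα.le,
      Real.rpow_natCast, ← Real.sqrt_eq_rpow]
    rw [show α ^ 3 = (Real.sqrt α ^ 3) ^ 2 by
      linear_combination (-(Real.sqrt α ^ 4 + Real.sqrt α ^ 2 * α + α ^ 2)) * Real.sq_sqrt hα.le]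
    exact Real.sqrt_sq (by positivity)
  refine ⟨min 1 (1 / (10 * A)), by positivity, 302 * A ^ 5 + 12 * A ^ 3 + 1, by positivity, ?_⟩
  intro δ hδ0 hδ1
  have hδne : δ ≠ 0 := by simpa [abs_pos] using hδ0
  have hδle1 : |δ| ≤ 1 := (lt_of_lt_of_le hδ1 (min_le_left _ _)).le
  have hδA : |δ| < 1 / (10 * A) := lt_of_lt_of_le hδ1 (min_le_right _ _)
  have habs2 : |δ| ^ 2 = δ ^ 2 := sq_abs δ
  have hδ2 : δ ^ 2 * α ≤ 1 / 100 := by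
    have h1 : |δ| * |δ| < (1 / (10 * A)) * (1 / (10 * A)) :=
      mul_lt_mul'' hδA hδA (abs_nonneg δ) (abs_nonneg δ)
    have h2 : (1 / (10 * A)) * (1 / (10 * A)) = 1 / (100 * α) := by
      rw [← hA2]; field_simp; ring
    have h3 : δ ^ 2 < 1 / (100 * α) := by
      rw [← habs2]; rw [h2] at h1; nlinarith [abs_nonneg δ]
    have h4 : δ ^ 2 * α < 1 / (100 * α) * α := mul_lt_mul_of_pos_right h3 hα
    have h5 : 1 / (100 * α) * α = 1 / 100 := by field_simp
    linarith [h4, h5.le]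
  have hδsq : δ ^ 2 ≤ |δ| := by
    rw [← habs2]; nlinarith [abs_nonneg δ]
  have h12 : 0 < 1 - 12 * δ ^ 2 * α := by nlinarith
  set s := Real.sqrt (1 - 12 * δ ^ 2 * α) with hsdef
  have hs2 : s ^ 2 = 1 - 12 * δ ^ 2 * α := Real.sq_sqrt h12.le
  have hs0 : 0 ≤ s := Real.sqrt_nonneg _
  have hs1 : s ≤ 1 := by nlinarith [mul_nonneg (sq_nonneg δ) hα.le]
  have hsh : 1 / 2 < s := by nlinarith
  set η := etaStar α δ with hηdef
  have hηeq : η = 1 / (|δ| * Real.sqrt 6) * Real.sqrt (1 - s) := by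
    rw [hηdef, etaStar, if_neg hδne]
  have hη0 : 0 ≤ η := by rw [hηeq]; positivity
  have h6 : (Real.sqrt 6) ^ 2 = 6 := Real.sq_sqrt (by norm_num)
  have h1s : (Real.sqrt (1 - s)) ^ 2 = 1 - s := Real.sq_sqrt (by linarith)
  clear_value s η
  have hη2 : η ^ 2 * (1 + s) = 2 * α := by
    have hd : |δ| ≠ 0 := ne_of_gt hδ0
    have h6' : Real.sqrt 6 ≠ 0 := by positivity
    rw [hηeq, mul_pow, div_pow, one_pow, mul_pow, h1s, habs2, h6]
    field_simp
    linear_combination (-(1:ℝ)) * hs2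
  have hE : (η - A) * ((η + A) * (1 + s) ^ 2) = 12 * δ ^ 2 * A ^ 4 := by
    linear_combination (1 + s) * hη2 - α * hs2 - ((1 + s) ^ 2 + 12 * δ ^ 2 * (A ^ 2 + α)) * hA2
  obtain ⟨⟨he0, heub⟩, hDlb⟩ := aux_e_bounds A s η δ hA hsh hs1 hη0 hE
  have hu : 1 - s ≤ 12 * δ ^ 2 * A ^ 2 := by nlinarith
  obtain ⟨hDlb2, hDub⟩ := aux_D_bounds A s η δ hA hsh hs1 hη0 hu he0 heub
  have hδ2' : δ ^ 2 * A ^ 2 ≤ 1 / 100 := by rw [hA2]; exact hδ2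
  obtain ⟨hc1, hc2⟩ := aux_core A s η δ hA hE hDlb hDlb2 hDub hδ2'
  constructor
  · rw [cStar, hpow, ← hηdef]
    have := aux_final A η δ hA he0 heub hδ2' hc1 hc2
    exact this
  · rw [abs_of_nonneg he0]
    have h1 : η - A ≤ 6 * A ^ 3 * |δ| :=
      heub.trans (mul_le_mul_of_nonneg_left hδsq (by positivity))
    have h2 : 6 * A ^ 3 * |δ| ≤ (302 * A ^ 5 + 12 * A ^ 3 + 1) * |δ| :=
      mul_le_mul_of_nonneg_right
        (by linarith [pow_nonneg hA.le 5, pow_nonneg hA.le 3]) (abs_nonneg δ)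
    linarith
end

section
/- (Preconditioner symbol estimates.) For every η ≥ 0 and every δ₀ > 0 there exists a constant C > 0 such that for all real δ with 0 < |δ| ≤ δ₀ and δ²η² ≤ 1/2, and all k ∈ ℝ: (i) |1 − δ²(ik − η)²| ≥ 1/2 + δ²k²; and (ii) (1 + k²) / |1 − δ²(ik − η)²|² ≤ C/δ². -/
/-!
The real part of `1 - δ²(ik - η)²` is `1 - δ²η² + δ²k²`, which is at least `1/2 + δ²k²` once
`δ²η² ≤ 1/2`; the modulus dominates the real part, giving (i). For (ii) it then suffices to bound
`(1 + k²) / (1/2 + δ²k²)²`, and `(1/2 + x)² ≥ 1/4 + x` makes this at most `(4δ₀² + 1) / δ²`.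
-/

open Complex

lemma re_one_sub_sq_mul_sq_I_mul_sub (δ η k : ℝ) :
    (1 - (δ : ℂ) ^ 2 * (I * (k : ℂ) - (η : ℂ)) ^ 2).re = 1 - δ ^ 2 * η ^ 2 + δ ^ 2 * k ^ 2 := by
  simp only [sub_re, one_re, mul_re, mul_im, sub_im, pow_two, I_re, I_im, ofReal_re, ofReal_im]
  ring

lemma half_add_le_norm_one_sub_sq_mul_sq_I_mul_sub {δ η : ℝ} (hδη : δ ^ 2 * η ^ 2 ≤ 1 / 2)
    (k : ℝ) : 1 / 2 + δ ^ 2 * k ^ 2 ≤ ‖1 - (δ : ℂ) ^ 2 * (I * (k : ℂ) - (η : ℂ)) ^ 2‖ :=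
  calc 1 / 2 + δ ^ 2 * k ^ 2 ≤ 1 - δ ^ 2 * η ^ 2 + δ ^ 2 * k ^ 2 := by linarith
    _ = (1 - (δ : ℂ) ^ 2 * (I * (k : ℂ) - (η : ℂ)) ^ 2).re :=
      (re_one_sub_sq_mul_sq_I_mul_sub δ η k).symm
    _ ≤ _ := re_le_norm _

lemma one_add_sq_div_sq_half_add_mul_sq_le {d D : ℝ} (hd : 0 < d) (hdD : d ≤ D) (k : ℝ) :
    (1 + k ^ 2) / (1 / 2 + d * k ^ 2) ^ 2 ≤ (4 * D + 1) / d := by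
  have hdk : 0 ≤ d * k ^ 2 := by positivity
  rw [div_le_div_iff₀ (by positivity) hd]
  calc (1 + k ^ 2) * d = d + d * k ^ 2 := by ring
    _ ≤ (4 * D + 1) * (1 / 4 + d * k ^ 2) := by nlinarith
    _ ≤ (4 * D + 1) * (1 / 2 + d * k ^ 2) ^ 2 :=
      mul_le_mul_of_nonneg_left (by nlinarith [sq_nonneg (d * k ^ 2)]) (by linarith)

theorem stmt6_general (η : ℝ) (δ₀ : ℝ) :
    ∃ C > (0 : ℝ), ∀ δ : ℝ, 0 < |δ| → |δ| ≤ δ₀ → δ ^ 2 * η ^ 2 ≤ 1 / 2 → ∀ k : ℝ,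
      (1 / 2 + δ ^ 2 * k ^ 2
          ≤ ‖(1 - (δ : ℂ) ^ 2 * (Complex.I * (k : ℂ) - (η : ℂ)) ^ 2)‖)
        ∧ (1 + k ^ 2) /
            ‖(1 - (δ : ℂ) ^ 2 * (Complex.I * (k : ℂ) - (η : ℂ)) ^ 2)‖ ^ 2
          ≤ C / δ ^ 2 := by
  refine ⟨4 * δ₀ ^ 2 + 1, by positivity, fun δ hδ hδδ₀ hδη k => ?_⟩
  have hlower := half_add_le_norm_one_sub_sq_mul_sq_I_mul_sub hδη k
  refine ⟨hlower, ?_⟩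
  have hδsq : 0 < δ ^ 2 := by rw [← sq_abs]; positivity
  have hδsq_le : δ ^ 2 ≤ δ₀ ^ 2 := sq_le_sq' (abs_le.mp hδδ₀).1 (abs_le.mp hδδ₀).2
  calc _ ≤ (1 + k ^ 2) / (1 / 2 + δ ^ 2 * k ^ 2) ^ 2 := by gcongr
    _ ≤ _ := one_add_sq_div_sq_half_add_mul_sq_le hδsq hδsq_le k

theorem stmt6 (η : ℝ) (hη : 0 ≤ η) (δ₀ : ℝ) (hδ₀ : 0 < δ₀) :
    ∃ C > (0 : ℝ), ∀ δ : ℝ, 0 < |δ| → |δ| ≤ δ₀ → δ ^ 2 * η ^ 2 ≤ 1 / 2 → ∀ k : ℝ,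
      (1 / 2 + δ ^ 2 * k ^ 2
          ≤ ‖(1 - (δ : ℂ) ^ 2 * (Complex.I * (k : ℂ) - (η : ℂ)) ^ 2)‖)
        ∧ (1 + k ^ 2) /
            ‖(1 - (δ : ℂ) ^ 2 * (Complex.I * (k : ℂ) - (η : ℂ)) ^ 2)‖ ^ 2
          ≤ C / δ ^ 2 :=
  stmt6_general η δ₀
end

section
/- (Symbol estimate for T(δ) = (1 − δ²∂_x²)⁻¹ − 1.) For every η ≥ 0 and every δ₀ > 0 there exists a constant C > 0 such that for all real δ with |δ| ≤ δ₀ and δ²η² ≤ 1/2, and all k ∈ ℝ: |δ²(ik − η)²| ≤ C·|δ|·√(1 + k²)·|1 − δ²(ik − η)²|; equivalently, the symbol δ²(ik − η)²/(1 − δ²(ik − η)²) of the conjugated operator T_η(δ) is bounded in modulus by C|δ|·√(1 + k²). -/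
/-!
With `w = ik - η` one has `‖δ²w²‖ = δ²(η² + k²)` and `Re (1 - δ²w²) = 1 - δ²η² + δ²k²`, so under
`δ²η² ≤ 1/2` the denominator is at least `1/2 + δ²k²`. The `η`-part of the numerator is then
absorbed using `δ² ≤ δ₀|δ|`, and the `k`-part using `t² ≤ t (1 + 2t²)` for `t = |δ k| ≤ |δ| √(1 + k²)`.
-/

open Complex

namespace SymbolEstimate

lemma norm_ofReal_sq_mul_sq (δ k η : ℝ) :
    ‖(δ : ℂ) ^ 2 * (I * k - η) ^ 2‖ = δ ^ 2 * (η ^ 2 + k ^ 2) := by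
  rw [norm_mul, norm_pow, norm_pow, norm_real, Real.norm_eq_abs, sq_abs, Complex.sq_norm, normSq_apply]
  simp only [sub_re, mul_re, I_re, I_im, ofReal_re, ofReal_im, sub_im, mul_im]
  ring

lemma re_one_sub_ofReal_sq_mul_sq (δ k η : ℝ) :
    (1 - (δ : ℂ) ^ 2 * (I * k - η) ^ 2).re = 1 - δ ^ 2 * η ^ 2 + δ ^ 2 * k ^ 2 := by
  simp only [sub_re, one_re, mul_re, sq, mul_im, sub_im, I_re, I_im, ofReal_re, ofReal_im]
  ring

lemma half_add_le_norm_one_sub_ofReal_sq_mul_sq {δ η : ℝ} (h : δ ^ 2 * η ^ 2 ≤ 1 / 2) (k : ℝ) :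
    1 / 2 + δ ^ 2 * k ^ 2 ≤ ‖1 - (δ : ℂ) ^ 2 * (I * k - η) ^ 2‖ :=
  calc 1 / 2 + δ ^ 2 * k ^ 2 ≤ (1 - (δ : ℂ) ^ 2 * (I * k - η) ^ 2).re := by
        rw [re_one_sub_ofReal_sq_mul_sq]; linarith
    _ ≤ _ := re_le_norm _

lemma sq_le_mul_one_add_two_mul_sq {t : ℝ} (ht : 0 ≤ t) : t ^ 2 ≤ t * (1 + 2 * t ^ 2) := by
  nlinarith [mul_nonneg ht (sq_nonneg (t - 1))]

lemma sq_mul_add_sq_le_of_abs_le {δ δ₀ : ℝ} (hδ : |δ| ≤ δ₀) (η k : ℝ) :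
    δ ^ 2 * (η ^ 2 + k ^ 2)
      ≤ (2 * δ₀ * η ^ 2 + 2) * |δ| * √(1 + k ^ 2) * (1 / 2 + δ ^ 2 * k ^ 2) := by
  set s := √(1 + k ^ 2)
  have hs_one : 1 ≤ s := Real.one_le_sqrt.mpr (by nlinarith)
  have hk_s : |k| ≤ s := Real.abs_le_sqrt (by linarith)
  have hδ_sq : δ ^ 2 ≤ δ₀ * |δ| := by
    rw [← sq_abs, sq]; exact mul_le_mul_of_nonneg_right hδ (abs_nonneg δ)
  have hη_part : δ ^ 2 * η ^ 2 ≤ 2 * δ₀ * η ^ 2 * |δ| * s * (1 / 2 + δ ^ 2 * k ^ 2) := by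
    have : 1 ≤ 2 * s * (1 / 2 + δ ^ 2 * k ^ 2) := by nlinarith [sq_nonneg (δ * k)]
    have hδ₀ : 0 ≤ δ₀ * |δ| * η ^ 2 := by nlinarith [abs_nonneg δ, sq_nonneg η]
    nlinarith [mul_le_mul_of_nonneg_left this hδ₀]
  have hk_part : δ ^ 2 * k ^ 2 ≤ 2 * |δ| * s * (1 / 2 + δ ^ 2 * k ^ 2) := by
    have ht := sq_le_mul_one_add_two_mul_sq (abs_nonneg (δ * k))
    rw [sq_abs, abs_mul] at ht
    have : |δ| * |k| ≤ |δ| * s := mul_le_mul_of_nonneg_left hk_s (abs_nonneg δ)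
    nlinarith [mul_le_mul_of_nonneg_right this (by positivity : (0 : ℝ) ≤ 1 + 2 * (δ * k) ^ 2)]
  linarith

end SymbolEstimate

open SymbolEstimate in
theorem stmt7_general (η : ℝ) (δ₀ : ℝ) (hδ₀ : 0 < δ₀) :
    ∃ C > (0 : ℝ), ∀ δ : ℝ, |δ| ≤ δ₀ → δ ^ 2 * η ^ 2 ≤ 1 / 2 → ∀ k : ℝ,
      ‖(δ : ℂ) ^ 2 * (Complex.I * (k : ℂ) - (η : ℂ)) ^ 2‖
        ≤ C * |δ| * Real.sqrt (1 + k ^ 2) *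
            ‖1 - (δ : ℂ) ^ 2 * (Complex.I * (k : ℂ) - (η : ℂ)) ^ 2‖ := by
  refine ⟨2 * δ₀ * η ^ 2 + 2, by positivity, fun δ hδ hδη k => ?_⟩
  rw [norm_ofReal_sq_mul_sq]
  calc δ ^ 2 * (η ^ 2 + k ^ 2)
      ≤ (2 * δ₀ * η ^ 2 + 2) * |δ| * √(1 + k ^ 2) * (1 / 2 + δ ^ 2 * k ^ 2) :=
        sq_mul_add_sq_le_of_abs_le hδ η k
    _ ≤ _ := by
        gcongr
        exact half_add_le_norm_one_sub_ofReal_sq_mul_sq hδη k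

theorem stmt7 (η : ℝ) (hη : 0 ≤ η) (δ₀ : ℝ) (hδ₀ : 0 < δ₀) :
    ∃ C > (0 : ℝ), ∀ δ : ℝ, |δ| ≤ δ₀ → δ ^ 2 * η ^ 2 ≤ 1 / 2 → ∀ k : ℝ,
      ‖(δ : ℂ) ^ 2 * (Complex.I * (k : ℂ) - (η : ℂ)) ^ 2‖
        ≤ C * |δ| * Real.sqrt (1 + k ^ 2) *
            ‖1 - (δ : ℂ) ^ 2 * (Complex.I * (k : ℂ) - (η : ℂ)) ^ 2‖ :=
  stmt7_general η δ₀ hδ₀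
end

section
/- (Root expansions for the shifted dispersion relation.) There exist δ₀ ∈ (0, 1/√(12α)), γ₀ > 0, and C > 0 with the following property: for each real δ with 0 < |δ| < δ₀ and each γ ∈ ℂ with |γ| < γ₀, the quartic polynomial ν ↦ d_{c_*(δ)}(γ², −η_*(δ) + ν) has exactly four roots ν₁, ν₂, ν₃, ν₄ (listed with multiplicity) which satisfy |ν₁ + 1/|δ|| ≤ C, |ν₄ − 1/|δ|| ≤ C, |ν₂ + γ| ≤ C(|δ||γ| + |γ|²), and |ν₃ − γ| ≤ C(|δ||γ| + |γ|²). Moreover ν₂ and ν₃ can be chosen as functions of (δ, γ), defined and continuous on (−δ₀, δ₀) × {|γ| < γ₀}, which are roots of this quartic and satisfy the stated bounds. -/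
/-!
Because `η_*` solves `3 δ² η⁴ - η² + α = 0` and `c_*` removes the linear term, the shifted
quartic is `ν² (1 - δ² ((ν - 2η_*)² + 2η_*²)) - γ²`. Writing `ν = γ u`, the small roots solve
`u² = 1 + O(δ²)`; the Newton map of `u² = 1` frozen at `u = 1` is a contraction near `1`, and its
fixed point depends continuously on `(|δ| γ, |δ| η_*(δ))`. Since
`|δ| η_*(δ) = √((1 - √(1 - 12 δ² α)) / 6)`, this is continuous across `δ = 0` as well.
The roots `ν₃ ≈ γ` and `ν₂ ≈ -γ` are distinct unless `γ = 0`, so they split off a quadratic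
factor `-δ² (ν - b)² + z` with `b = O(1)` and `z = 1 + O(δ²)`, whose roots are `b ± √z / |δ|`.
-/

open Metric Set Filter Topology NNReal

theorem exists_continuousOn_fixedPoint {X E : Type*} [TopologicalSpace X] [MetricSpace E]
    {s : Set X} {t : Set E} (htc : IsComplete t) (ht : t.Nonempty) {f : X → E → E} {K : ℝ≥0}
    (hK : K < 1) (hmaps : ∀ p ∈ s, MapsTo (f p) t t) (hlip : ∀ p ∈ s, LipschitzOnWith K (f p) t)
    (hcont : ∀ x ∈ t, ContinuousOn (f · x) s) :
    ∃ g : X → E, ContinuousOn g s ∧ ∀ p ∈ s, g p ∈ t ∧ f p (g p) = g p := by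
  obtain ⟨x₀, hx₀⟩ := ht
  have hfix : ∀ p, ∃ y, p ∈ s → y ∈ t ∧ f p y = y := by
    intro p
    by_cases hp : p ∈ s
    · obtain ⟨y, hyt, hy, -⟩ := ContractingWith.exists_fixedPoint' htc (hmaps p hp)
        ⟨hK, (hlip p hp).mapsToRestrict (hmaps p hp)⟩ hx₀ (edist_ne_top _ _)
      exact ⟨y, fun _ => ⟨hyt, hy⟩⟩
    · exact ⟨x₀, fun h => absurd h hp⟩
  choose g hg using hfix
  refine ⟨g, fun p hp => ?_, fun p hp => hg p hp⟩
  have hle : ∀ q ∈ s, dist (g q) (g p) ≤ dist (f q (g p)) (f p (g p)) / (1 - K) := by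
    intro q hq
    rw [le_div_iff₀ (by simpa using hK)]
    have hcontr : dist (f q (g q)) (f q (g p)) ≤ K * dist (g q) (g p) :=
      (hlip q hq).dist_le_mul _ (hg q hq).1 _ (hg p hp).1
    have htri := dist_triangle (f q (g q)) (f q (g p)) (f p (g p))
    rw [(hg q hq).2, (hg p hp).2] at htri
    rw [(hg p hp).2]
    rw [(hg q hq).2] at hcontr
    linarith
  have hlim : Tendsto (fun q => dist (f q (g p)) (f p (g p)) / (1 - K)) (𝓝[s] p) (𝓝 0) := by
    simpa using ((tendsto_iff_dist_tendsto_zero.1 (hcont _ (hg p hp).1 p hp)).div_const _)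
  exact tendsto_iff_dist_tendsto_zero.2 <| squeeze_zero' (Eventually.of_forall fun _ => dist_nonneg)
    (eventually_nhdsWithin_of_forall hle) hlim

theorem Complex.norm_sub_one_le_norm_sq_sub_one {w : ℂ} (hw : 0 ≤ w.re) :
    ‖w - 1‖ ≤ ‖w ^ 2 - 1‖ := by
  have h1 : 1 ≤ ‖w + 1‖ := by
    have := Complex.re_le_norm (w + 1)
    simp only [Complex.add_re, Complex.one_re] at this
    linarith
  calc ‖w - 1‖ ≤ ‖w - 1‖ * ‖w + 1‖ := le_mul_of_one_le_right (norm_nonneg _) h1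
    _ = ‖w ^ 2 - 1‖ := by rw [← norm_mul]; ring_nf

theorem Complex.exists_sq_eq_norm_sub_one_le (z : ℂ) :
    ∃ w : ℂ, w ^ 2 = z ∧ ‖w - 1‖ ≤ ‖z - 1‖ := by
  obtain ⟨w, hw⟩ := IsAlgClosed.exists_pow_nat_eq z two_pos
  rcases le_total 0 w.re with h | h
  · exact ⟨w, hw, hw ▸ Complex.norm_sub_one_le_norm_sq_sub_one h⟩
  · refine ⟨-w, by rw [neg_sq, hw], ?_⟩
    simpa [neg_sq, hw] using Complex.norm_sub_one_le_norm_sq_sub_one (w := -w) (by simpa using h)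

-- `u ↦ 1 - ((u - 1) ^ 2 - φ u) / 2` is Newton's map for `u ^ 2 = 1 + φ u`, frozen at `u = 1`.
theorem mapsTo_newton_closedBall {φ : ℂ → ℂ}
    (hφ : ∀ u ∈ closedBall (1 : ℂ) (1 / 2), ‖φ u‖ ≤ 1 / 2) :
    MapsTo (fun u => 1 - ((u - 1) ^ 2 - φ u) / 2) (closedBall 1 (1 / 2)) (closedBall 1 (1 / 2)) := by
  intro u hu
  have hu' : ‖u - 1‖ ≤ 1 / 2 := by simpa [dist_eq_norm] using hu
  have hφu := hφ u hu
  rw [mem_closedBall, dist_eq_norm]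
  calc ‖1 - ((u - 1) ^ 2 - φ u) / 2 - 1‖ = ‖(u - 1) ^ 2 - φ u‖ / 2 := by
        rw [sub_sub_cancel_left, norm_neg, norm_div]; simp
    _ ≤ (‖u - 1‖ ^ 2 + ‖φ u‖) / 2 := by
        gcongr; exact (norm_sub_le _ _).trans (by rw [norm_pow])
    _ ≤ 1 / 2 := by nlinarith [norm_nonneg (u - 1)]

theorem lipschitzOnWith_newton_closedBall {φ : ℂ → ℂ}
    (hφ : LipschitzOnWith (1 / 2) φ (closedBall 1 (1 / 2))) :
    LipschitzOnWith (3 / 4) (fun u => 1 - ((u - 1) ^ 2 - φ u) / 2) (closedBall 1 (1 / 2)) := by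
  refine LipschitzOnWith.of_dist_le_mul fun u hu v hv => ?_
  have hu' : ‖u - 1‖ ≤ 1 / 2 := by simpa [dist_eq_norm] using hu
  have hv' : ‖v - 1‖ ≤ 1 / 2 := by simpa [dist_eq_norm] using hv
  have hφuv := hφ.dist_le_mul u hu v hv
  simp only [dist_eq_norm] at hφuv ⊢
  have huv : ‖u + v - 2‖ ≤ 1 :=
    calc ‖u + v - 2‖ = ‖(u - 1) + (v - 1)‖ := by ring_nf
      _ ≤ 1 := (norm_add_le _ _).trans (by linarith)
  calc ‖1 - ((u - 1) ^ 2 - φ u) / 2 - (1 - ((v - 1) ^ 2 - φ v) / 2)‖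
        = ‖((φ u - φ v) - (u - v) * (u + v - 2)) / 2‖ := by ring_nf
    _ = ‖(φ u - φ v) - (u - v) * (u + v - 2)‖ / 2 := by simp
    _ ≤ (‖φ u - φ v‖ + ‖u - v‖ * ‖u + v - 2‖) / 2 := by
        gcongr; exact (norm_sub_le _ _).trans (by rw [norm_mul])
    _ ≤ ((3 / 4 : ℝ≥0) : ℝ) * ‖u - v‖ := by
        push_cast at hφuv ⊢
        nlinarith [norm_nonneg (u - v)]

theorem exists_continuousOn_sq_eq_one_add {X : Type*} [TopologicalSpace X] {s : Set X}
    {φ : X → ℂ → ℂ} (hbound : ∀ p ∈ s, ∀ u ∈ closedBall (1 : ℂ) (1 / 2), ‖φ p u‖ ≤ 1 / 2)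
    (hlip : ∀ p ∈ s, LipschitzOnWith (1 / 2) (φ p) (closedBall 1 (1 / 2)))
    (hcont : ∀ u ∈ closedBall (1 : ℂ) (1 / 2), ContinuousOn (φ · u) s) :
    ∃ U : X → ℂ, ContinuousOn U s ∧ ∀ p ∈ s,
      U p ^ 2 = 1 + φ p (U p) ∧ ‖U p - 1‖ ≤ 1 / 2 ∧ ‖U p - 1‖ ≤ ‖φ p (U p)‖ := by
  obtain ⟨U, hUcont, hU⟩ := exists_continuousOn_fixedPoint isClosed_closedBall.isComplete
    ⟨1, mem_closedBall_self (by norm_num)⟩ (by rw [← NNReal.coe_lt_coe]; norm_num)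
    (fun p hp => mapsTo_newton_closedBall (hbound p hp))
    (fun p hp => lipschitzOnWith_newton_closedBall (hlip p hp))
    (fun u hu => continuousOn_const.sub ((continuousOn_const.sub (hcont u hu)).div_const 2))
  refine ⟨U, hUcont, fun p hp => ?_⟩
  obtain ⟨hUball, hUfix⟩ := hU p hp
  have hsq : U p ^ 2 = 1 + φ p (U p) := by linear_combination -2 * hUfix
  have hdist : ‖U p - 1‖ ≤ 1 / 2 := by simpa [dist_eq_norm] using hUball
  have hre : 0 ≤ (U p).re := by
    have := Complex.abs_re_le_norm (U p - 1)
    simp only [Complex.sub_re, Complex.one_re] at this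
    linarith [neg_abs_le ((U p).re - 1)]
  refine ⟨hsq, hdist, ?_⟩
  simpa [hsq] using Complex.norm_sub_one_le_norm_sq_sub_one hre

-- For `q = (|δ| γ, |δ| η)` and `γ ≠ 0`, `γ u` is a root of `shiftedDisp δ η γ` iff
-- `u ^ 2 = 1 + rootPerturbation q u` (`shiftedDisp_mul` below).
def rootPerturbation (q : ℂ × ℂ) (u : ℂ) : ℂ := u ^ 2 * ((q.1 * u - 2 * q.2) ^ 2 + 2 * q.2 ^ 2)

section rootPerturbation

variable (q : ℂ × ℂ) {u v : ℂ}

theorem norm_mul_sub_two_mul_le (hu : ‖u‖ ≤ 3 / 2) : ‖q.1 * u - 2 * q.2‖ ≤ 7 / 2 * ‖q‖ :=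
  calc ‖q.1 * u - 2 * q.2‖ ≤ ‖q.1‖ * ‖u‖ + 2 * ‖q.2‖ := by
        refine (norm_sub_le _ _).trans ?_; simp
    _ ≤ ‖q‖ * (3 / 2) + 2 * ‖q‖ := by gcongr; exacts [norm_fst_le q, norm_snd_le q]
    _ = 7 / 2 * ‖q‖ := by ring

theorem norm_rootPerturbation_le (hu : ‖u‖ ≤ 3 / 2) : ‖rootPerturbation q u‖ ≤ 40 * ‖q‖ ^ 2 := by
  have hb := norm_snd_le q
  calc ‖rootPerturbation q u‖ ≤ ‖u‖ ^ 2 * (‖q.1 * u - 2 * q.2‖ ^ 2 + 2 * ‖q.2‖ ^ 2) := by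
        rw [rootPerturbation, norm_mul, norm_pow]
        gcongr
        refine (norm_add_le _ _).trans ?_
        simp
    _ ≤ (3 / 2) ^ 2 * ((7 / 2 * ‖q‖) ^ 2 + 2 * ‖q‖ ^ 2) := by
        gcongr; exact norm_mul_sub_two_mul_le q hu
    _ ≤ 40 * ‖q‖ ^ 2 := by nlinarith [sq_nonneg ‖q‖]

theorem norm_rootPerturbation_sub_le (hu : ‖u‖ ≤ 3 / 2) (hv : ‖v‖ ≤ 3 / 2) :
    ‖rootPerturbation q u - rootPerturbation q v‖ ≤ 60 * ‖q‖ ^ 2 * ‖u - v‖ := by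
  have hb := norm_snd_le q
  have huv : ‖u + v‖ ≤ 3 := (norm_add_le _ _).trans (by linarith)
  have hA : ∀ w : ℂ, ‖w‖ ≤ 3 / 2 → ‖w * (q.1 * w - 2 * q.2)‖ ≤ 21 / 4 * ‖q‖ := fun w hw =>
    calc ‖w * (q.1 * w - 2 * q.2)‖ ≤ 3 / 2 * (7 / 2 * ‖q‖) := by
          rw [norm_mul]; gcongr; exact norm_mul_sub_two_mul_le q hw
      _ = 21 / 4 * ‖q‖ := by ring
  have hS : ‖q.1 * (u + v) - 2 * q.2‖ ≤ 5 * ‖q‖ :=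
    calc ‖q.1 * (u + v) - 2 * q.2‖ ≤ ‖q.1‖ * ‖u + v‖ + 2 * ‖q.2‖ := by
          refine (norm_sub_le _ _).trans ?_; simp
      _ ≤ ‖q‖ * 3 + 2 * ‖q‖ := by gcongr; exact norm_fst_le q
      _ = 5 * ‖q‖ := by ring
  have hfac : rootPerturbation q u - rootPerturbation q v = (u - v) *
      ((q.1 * (u + v) - 2 * q.2) * (u * (q.1 * u - 2 * q.2) + v * (q.1 * v - 2 * q.2))
        + 2 * q.2 ^ 2 * (u + v)) := by
    unfold rootPerturbation; ring
  rw [hfac, norm_mul, mul_comm]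
  gcongr
  calc _ ≤ ‖q.1 * (u + v) - 2 * q.2‖ * (‖u * (q.1 * u - 2 * q.2)‖ + ‖v * (q.1 * v - 2 * q.2)‖)
        + 2 * ‖q.2‖ ^ 2 * ‖u + v‖ := by
        refine (norm_add_le _ _).trans ?_
        simp only [norm_mul, norm_pow, Complex.norm_ofNat]
        gcongr
        exact (norm_add_le _ _).trans_eq (by simp only [norm_mul])
    _ ≤ 5 * ‖q‖ * (21 / 4 * ‖q‖ + 21 / 4 * ‖q‖) + 2 * ‖q‖ ^ 2 * 3 := by
        gcongr; exacts [hA u hu, hA v hv]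
    _ ≤ 60 * ‖q‖ ^ 2 := by nlinarith [sq_nonneg ‖q‖]

end rootPerturbation

theorem exists_continuousOn_sq_eq_one_add_rootPerturbation :
    ∃ U : ℂ × ℂ → ℂ, ContinuousOn U (closedBall 0 (1 / 20)) ∧
      ∀ q ∈ closedBall (0 : ℂ × ℂ) (1 / 20),
        U q ^ 2 = 1 + rootPerturbation q (U q) ∧ ‖U q - 1‖ ≤ 1 / 2 ∧ ‖U q - 1‖ ≤ 2 * ‖q‖ := by
  have hball : ∀ u ∈ closedBall (1 : ℂ) (1 / 2), ‖u‖ ≤ 3 / 2 := fun u hu => by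
    rw [mem_closedBall, dist_eq_norm] at hu
    linarith [norm_le_norm_add_norm_sub' u 1, norm_one (α := ℂ)]
  have hq : ∀ q ∈ closedBall (0 : ℂ × ℂ) (1 / 20), ‖q‖ ≤ 1 / 20 := fun q hq => by
    simpa using hq
  obtain ⟨U, hUcont, hU⟩ := exists_continuousOn_sq_eq_one_add (φ := rootPerturbation)
    (fun q hq' u hu => (norm_rootPerturbation_le q (hball u hu)).trans
      (by nlinarith [hq q hq', norm_nonneg q]))
    (fun q hq' => LipschitzOnWith.of_dist_le_mul fun u hu v hv => by
      rw [dist_eq_norm, dist_eq_norm]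
      refine (norm_rootPerturbation_sub_le q (hball u hu) (hball v hv)).trans ?_
      gcongr
      push_cast
      nlinarith [hq q hq', norm_nonneg q])
    (fun u _ => by unfold rootPerturbation; fun_prop)
  refine ⟨U, hUcont, fun q hq' => ?_⟩
  obtain ⟨hsq, hhalf, hle⟩ := hU q hq'
  refine ⟨hsq, hhalf, hle.trans ((norm_rootPerturbation_le q ?_).trans ?_)⟩
  · exact hball _ (by simpa [dist_eq_norm] using hhalf)
  · nlinarith [hq q hq', norm_nonneg q]

section etaStar

variable {α : ℝ} (δ : ℝ)

theorem abs_mul_etaStar :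
    |δ| * etaStar α δ = √((1 - √(1 - 12 * δ ^ 2 * α)) / 6) := by
  rcases eq_or_ne δ 0 with rfl | hδ
  · simp
  · rw [etaStar, if_neg hδ, Real.sqrt_div' _ (by norm_num : (0 : ℝ) ≤ 6)]
    field_simp [abs_ne_zero.2 hδ]

theorem continuous_abs_mul_etaStar (α : ℝ) : Continuous fun δ => |δ| * etaStar α δ := by
  simp_rw [abs_mul_etaStar]
  fun_prop

theorem sq_abs_mul_etaStar (hα : 0 ≤ α) :
    (|δ| * etaStar α δ) ^ 2 = (1 - √(1 - 12 * δ ^ 2 * α)) / 6 := by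
  have : √(1 - 12 * δ ^ 2 * α) ≤ 1 := Real.sqrt_le_one.2 (by nlinarith [sq_nonneg δ])
  rw [abs_mul_etaStar, Real.sq_sqrt (by linarith)]

theorem sq_abs_mul_etaStar_le (hα : 0 ≤ α) : (|δ| * etaStar α δ) ^ 2 ≤ 2 * α * δ ^ 2 := by
  have : 1 - 12 * δ ^ 2 * α ≤ √(1 - 12 * δ ^ 2 * α) :=
    Real.le_sqrt_self_iff.2 (by nlinarith [sq_nonneg δ])
  rw [sq_abs_mul_etaStar δ hα]
  linarith

theorem etaStar_nonneg : 0 ≤ etaStar α δ := by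
  unfold etaStar; split_ifs <;> positivity

theorem etaStar_sq_le (hα : 0 ≤ α) : etaStar α δ ^ 2 ≤ 2 * α := by
  rcases eq_or_ne δ 0 with rfl | hδ
  · rw [etaStar, if_pos rfl, Real.sq_sqrt hα]; linarith
  · have h := sq_abs_mul_etaStar_le δ hα
    rw [mul_pow, sq_abs, mul_comm] at h
    exact le_of_mul_le_mul_right h (by positivity)

theorem etaStar_le (hα : 0 ≤ α) : etaStar α δ ≤ α + 1 := by
  nlinarith [etaStar_sq_le δ hα, etaStar_nonneg (α := α) δ]

-- This relation is what removes the constant term of `d_{c_*(δ)}(0, -η_*(δ) + ν)`.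
theorem etaStar_quartic (hα : 0 ≤ α) (h : 12 * δ ^ 2 * α ≤ 1) :
    3 * δ ^ 2 * etaStar α δ ^ 4 - etaStar α δ ^ 2 + α = 0 := by
  rcases eq_or_ne δ 0 with rfl | hδ
  · rw [etaStar, if_pos rfl, Real.sq_sqrt hα]; ring
  · have hθ := sq_abs_mul_etaStar δ hα
    have hs := Real.sq_sqrt (show 0 ≤ 1 - 12 * δ ^ 2 * α by linarith)
    rw [mul_pow, sq_abs] at hθ
    have : δ ^ 2 * (3 * δ ^ 2 * etaStar α δ ^ 4 - etaStar α δ ^ 2 + α) = 0 := by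
      linear_combination (3 * δ ^ 2 * etaStar α δ ^ 2 + (1 - √(1 - 12 * δ ^ 2 * α)) / 2 - 1) * hθ
        + hs / 12
    exact (mul_eq_zero.1 this).resolve_left (by positivity)

end etaStar

def shiftedDisp (δ η : ℝ) (γ ν : ℂ) : ℂ :=
  ν ^ 2 * (1 - (δ : ℂ) ^ 2 * ((ν - 2 * η) ^ 2 + 2 * (η : ℂ) ^ 2)) - γ ^ 2

theorem disp_cStar_eq_shiftedDisp {α δ : ℝ} (hα : 0 ≤ α) (h : 12 * δ ^ 2 * α ≤ 1) (γ ν : ℂ) :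
    disp α δ (cStar α δ) (γ ^ 2) (-(etaStar α δ : ℂ) + ν) = shiftedDisp δ (etaStar α δ) γ ν := by
  have hq : 3 * (δ : ℂ) ^ 2 * (etaStar α δ : ℂ) ^ 4 - (etaStar α δ : ℂ) ^ 2 + α = 0 := by
    exact_mod_cast etaStar_quartic δ hα h
  unfold disp cStar shiftedDisp
  push_cast
  linear_combination hq

theorem shiftedDisp_neg (δ η : ℝ) (γ ν : ℂ) : shiftedDisp δ η (-γ) ν = shiftedDisp δ η γ ν := by
  simp [shiftedDisp]

theorem shiftedDisp_mul (δ η : ℝ) (γ u : ℂ) :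
    shiftedDisp δ η γ (γ * u) =
      γ ^ 2 * (u ^ 2 - (1 + rootPerturbation (|δ| * γ, (|δ| * η : ℝ)) u)) := by
  have hδ : ((|δ| : ℝ) : ℂ) ^ 2 = (δ : ℂ) ^ 2 := by exact_mod_cast sq_abs δ
  unfold shiftedDisp rootPerturbation
  push_cast
  linear_combination (γ ^ 2 * u ^ 2 * ((γ * u - 2 * η) ^ 2 + 2 * (η : ℂ) ^ 2)) * hδ

theorem exists_continuousOn_root_shiftedDisp {α : ℝ} (hα : 0 ≤ α) : ∃ ν : ℝ → ℂ → ℂ,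
    ContinuousOn (fun p : ℝ × ℂ => ν p.1 p.2)
      (Ioo (-(1 / (20 * (α + 1)))) (1 / (20 * (α + 1))) ×ˢ ball 0 (1 / 20)) ∧
    ∀ δ : ℝ, |δ| < 1 / (20 * (α + 1)) → ∀ γ : ℂ, ‖γ‖ < 1 / 20 →
      shiftedDisp δ (etaStar α δ) γ (ν δ γ) = 0 ∧
      ‖ν δ γ - γ‖ ≤ 2 * (α + 1) * |δ| * ‖γ‖ ∧ ‖ν δ γ - γ‖ ≤ ‖γ‖ / 2 := by
  obtain ⟨U, hUcont, hU⟩ := exists_continuousOn_sq_eq_one_add_rootPerturbation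
  set P : ℝ × ℂ → ℂ × ℂ := fun p => (|p.1| * p.2, (|p.1| * etaStar α p.1 : ℝ)) with hPdef
  have hPcont : Continuous P :=
    (by fun_prop : Continuous fun p : ℝ × ℂ => ((|p.1| : ℝ) : ℂ) * p.2).prodMk
      (Complex.continuous_ofReal.comp ((continuous_abs_mul_etaStar α).comp continuous_fst))
  have hP : ∀ δ : ℝ, |δ| < 1 / (20 * (α + 1)) → ∀ γ : ℂ, ‖γ‖ < 1 / 20 →
      ‖P (δ, γ)‖ ≤ (α + 1) * |δ| ∧ (α + 1) * |δ| ≤ 1 / 20 := by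
    intro δ hδ γ hγ
    have hη := etaStar_le δ hα
    refine ⟨norm_prod_le_iff.2 ⟨?_, ?_⟩, ?_⟩
    · simp only [hPdef, norm_mul, Complex.norm_real, Real.norm_eq_abs, abs_abs]
      nlinarith [abs_nonneg δ]
    · simp only [hPdef, Complex.norm_real, Real.norm_eq_abs, abs_mul, abs_abs,
        abs_of_nonneg (etaStar_nonneg (α := α) δ)]
      nlinarith [abs_nonneg δ]
    · rw [lt_div_iff₀ (by positivity)] at hδ
      linarith
  refine ⟨fun δ γ => γ * U (P (δ, γ)), ?_, fun δ hδ γ hγ => ?_⟩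
  · refine continuousOn_snd.mul (hUcont.comp hPcont.continuousOn fun p hp => ?_)
    obtain ⟨hp1, hp2⟩ := hp
    have := hP p.1 (abs_lt.2 hp1) p.2 (by simpa using hp2)
    simpa using this.1.trans this.2
  obtain ⟨hPδ, hPsmall⟩ := hP δ hδ γ hγ
  obtain ⟨hsq, hhalf, hle⟩ := hU (P (δ, γ)) (by simpa using hPδ.trans hPsmall)
  have hsub : γ * U (P (δ, γ)) - γ = γ * (U (P (δ, γ)) - 1) := by ring
  refine ⟨?_, ?_, ?_⟩
  · rw [shiftedDisp_mul, ← hsq, sub_self, mul_zero]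
  · rw [hsub, norm_mul]
    nlinarith [norm_nonneg γ]
  · rw [hsub, norm_mul]
    nlinarith [norm_nonneg γ]

theorem shiftedDisp_eq_mul_of_roots {δ η : ℝ} {γ x y : ℂ} (hx : shiftedDisp δ η γ x = 0)
    (hy : shiftedDisp δ η γ y = 0) (hxγ : ‖x - γ‖ ≤ ‖γ‖ / 2) (hyγ : ‖y + γ‖ ≤ ‖γ‖ / 2) (ν : ℂ) :
    shiftedDisp δ η γ ν = (ν - x) * (ν - y) * (-(δ : ℂ) ^ 2 * (ν - (2 * η - (x + y) / 2)) ^ 2 +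
      (1 - (δ : ℂ) ^ 2 * (2 * η ^ 2 - 2 * η * (x + y) + 3 / 4 * (x + y) ^ 2 - x * y))) := by
  rcases eq_or_ne γ 0 with rfl | hγ
  · obtain rfl : x = 0 := by simpa using hxγ
    obtain rfl : y = 0 := by simpa using hyγ
    simp only [shiftedDisp]
    ring
  have hxy : x ≠ y := by
    rintro rfl
    have : ‖(2 : ℂ) * γ‖ ≤ ‖γ‖ :=
      calc ‖(2 : ℂ) * γ‖ = ‖(x + γ) - (x - γ)‖ := by ring_nf
        _ ≤ ‖γ‖ := (norm_sub_le _ _).trans (by linarith)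
    rw [norm_mul, Complex.norm_two] at this
    exact hγ (norm_eq_zero.1 (by linarith [norm_nonneg γ]))
  -- the difference of both sides is affine in `ν` and vanishes at the two roots `x ≠ y`
  have key : (x - y) * (shiftedDisp δ η γ ν - (ν - x) * (ν - y) *
      (-(δ : ℂ) ^ 2 * (ν - (2 * η - (x + y) / 2)) ^ 2 +
        (1 - (δ : ℂ) ^ 2 * (2 * η ^ 2 - 2 * η * (x + y) + 3 / 4 * (x + y) ^ 2 - x * y)))) =
      (ν - y) * shiftedDisp δ η γ x - (ν - x) * shiftedDisp δ η γ y := by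
    simp only [shiftedDisp]
    ring
  rw [hx, hy, mul_zero, mul_zero, sub_zero] at key
  exact sub_eq_zero.1 ((mul_eq_zero.1 key).resolve_left (sub_ne_zero.2 hxy))

theorem exists_shiftedDisp_eq_mul {δ η M : ℝ} {γ x y : ℂ} (hη0 : 0 ≤ η) (hη : η ≤ M)
    (hγ : ‖γ‖ ≤ 1 / 20) (hx : shiftedDisp δ η γ x = 0) (hy : shiftedDisp δ η γ y = 0)
    (hxγ : ‖x - γ‖ ≤ ‖γ‖ / 2) (hyγ : ‖y + γ‖ ≤ ‖γ‖ / 2) :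
    ∃ b z : ℂ, (∀ ν, shiftedDisp δ η γ ν = (ν - x) * (ν - y) * (-(δ : ℂ) ^ 2 * (ν - b) ^ 2 + z)) ∧
      ‖b‖ ≤ 2 * M + 1 ∧ ‖z - 1‖ ≤ (2 * M + 1) ^ 2 * δ ^ 2 := by
  have hx' : ‖x‖ ≤ 3 / 40 := by
    linarith [norm_le_norm_add_norm_sub' x γ]
  have hy' : ‖y‖ ≤ 3 / 40 := by
    have := norm_sub_le (y + γ) γ
    rw [add_sub_cancel_right] at this
    linarith
  have hσ : ‖x + y‖ ≤ 3 / 20 := (norm_add_le _ _).trans (by linarith)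
  have hπ : ‖x * y‖ ≤ 1 / 100 := by rw [norm_mul]; nlinarith [norm_nonneg x, norm_nonneg y]
  have hηc : ‖(η : ℂ)‖ ≤ M := by rwa [Complex.norm_real, Real.norm_eq_abs, abs_of_nonneg hη0]
  refine ⟨_, _, shiftedDisp_eq_mul_of_roots hx hy hxγ hyγ, ?_, ?_⟩
  · calc ‖2 * (η : ℂ) - (x + y) / 2‖ ≤ 2 * ‖(η : ℂ)‖ + ‖x + y‖ / 2 := by
          refine (norm_sub_le _ _).trans ?_; simp
      _ ≤ 2 * M + 1 := by linarith
  · set W : ℂ := 2 * η ^ 2 - 2 * η * (x + y) + 3 / 4 * (x + y) ^ 2 - x * y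
    have hWle : ‖W‖ ≤ (2 * M + 1) ^ 2 := by
      calc ‖W‖ ≤ 2 * ‖(η : ℂ)‖ ^ 2 + 2 * ‖(η : ℂ)‖ * ‖x + y‖ + 3 / 4 * ‖x + y‖ ^ 2 + ‖x * y‖ :=
            norm_sub_le_of_le (norm_add_le_of_le (norm_sub_le_of_le (by simp) (by simp)) (by simp))
              le_rfl
        _ ≤ 2 * M ^ 2 + 2 * M * (3 / 20) + 3 / 4 * (3 / 20) ^ 2 + 1 / 100 := by
            gcongr; linarith
        _ ≤ (2 * M + 1) ^ 2 := by nlinarith [hη0.trans hη]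
    calc ‖1 - (δ : ℂ) ^ 2 * W - 1‖ = δ ^ 2 * ‖W‖ := by
          rw [sub_sub_cancel_left, norm_neg, norm_mul, norm_pow, Complex.norm_real,
            Real.norm_eq_abs, sq_abs]
      _ ≤ (2 * M + 1) ^ 2 * δ ^ 2 := by rw [mul_comm]; gcongr

theorem exists_roots_vertexForm {d : ℝ} (hd : d ≠ 0) (b z : ℂ) :
    ∃ ν₁ ν₄ : ℂ, (∀ ν, -(d : ℂ) ^ 2 * (ν - b) ^ 2 + z = -(d : ℂ) ^ 2 * (ν - ν₁) * (ν - ν₄)) ∧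
      ‖ν₁ + (1 / |d| : ℝ)‖ ≤ ‖b‖ + ‖z - 1‖ / |d| ∧ ‖ν₄ - (1 / |d| : ℝ)‖ ≤ ‖b‖ + ‖z - 1‖ / |d| := by
  obtain ⟨w, hw, hw1⟩ := Complex.exists_sq_eq_norm_sub_one_le z
  have hd' : ((|d| : ℝ) : ℂ) ≠ 0 := by exact_mod_cast abs_ne_zero.2 hd
  have hsq : ((|d| : ℝ) : ℂ) ^ 2 = (d : ℂ) ^ 2 := by exact_mod_cast sq_abs d
  have hnorm : ‖(w - 1) / ((|d| : ℝ) : ℂ)‖ ≤ ‖z - 1‖ / |d| := by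
    rw [norm_div, Complex.norm_real, Real.norm_eq_abs, abs_abs]
    gcongr
  refine ⟨b - w / |d|, b + w / |d|, fun ν => ?_, ?_, ?_⟩
  · rw [← hw, ← hsq]
    field_simp
    ring
  · calc ‖b - w / |d| + (1 / |d| : ℝ)‖ = ‖b - (w - 1) / ((|d| : ℝ) : ℂ)‖ := by
          push_cast; ring_nf
      _ ≤ ‖b‖ + ‖z - 1‖ / |d| := (norm_sub_le _ _).trans (by gcongr)
  · calc ‖b + w / |d| - (1 / |d| : ℝ)‖ = ‖b + (w - 1) / ((|d| : ℝ) : ℂ)‖ := by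
          push_cast; ring_nf
      _ ≤ ‖b‖ + ‖z - 1‖ / |d| := (norm_add_le _ _).trans (by gcongr)

theorem exists_shiftedDisp_eq_prod {δ η M : ℝ} {γ x y : ℂ} (hδ : δ ≠ 0) (hM : 1 ≤ M)
    (hδM : M * |δ| ≤ 1 / 20) (hη0 : 0 ≤ η) (hη : η ≤ M) (hγ : ‖γ‖ ≤ 1 / 20)
    (hx : shiftedDisp δ η γ x = 0) (hy : shiftedDisp δ η γ y = 0)
    (hxγ : ‖x - γ‖ ≤ ‖γ‖ / 2) (hyγ : ‖y + γ‖ ≤ ‖γ‖ / 2) :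
    ∃ ν₁ ν₄ : ℂ,
      (∀ ν, shiftedDisp δ η γ ν = -(δ : ℂ) ^ 2 * (ν - ν₁) * (ν - y) * (ν - x) * (ν - ν₄)) ∧
      ‖ν₁ + (1 / |δ| : ℝ)‖ ≤ 4 * M ∧ ‖ν₄ - (1 / |δ| : ℝ)‖ ≤ 4 * M := by
  obtain ⟨b, z, hfac, hb, hz⟩ := exists_shiftedDisp_eq_mul hη0 hη hγ hx hy hxγ hyγ
  obtain ⟨ν₁, ν₄, hquad, h₁, h₄⟩ := exists_roots_vertexForm hδ b z
  have hδ0 : 0 < |δ| := abs_pos.2 hδ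
  have hfar : ‖b‖ + ‖z - 1‖ / |δ| ≤ 4 * M := by
    have hz' : ‖z - 1‖ / |δ| ≤ (2 * M + 1) ^ 2 * |δ| := by
      rw [div_le_iff₀ hδ0, mul_assoc, ← sq, sq_abs]; exact hz
    nlinarith
  exact ⟨ν₁, ν₄, fun ν => by rw [hfac, hquad]; ring, h₁.trans hfar, h₄.trans hfar⟩

theorem stmt11 (α : ℝ) (hα : 0 < α) :
    ∃ δ₀ : ℝ, 0 < δ₀ ∧ δ₀ < 1 / Real.sqrt (12 * α) ∧
    ∃ γ₀ > (0 : ℝ), ∃ C > (0 : ℝ), ∃ ν₂ ν₃ : ℝ → ℂ → ℂ,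
      ContinuousOn (fun p : ℝ × ℂ => ν₂ p.1 p.2)
        (Set.Ioo (-δ₀) δ₀ ×ˢ Metric.ball (0 : ℂ) γ₀)
      ∧ ContinuousOn (fun p : ℝ × ℂ => ν₃ p.1 p.2)
          (Set.Ioo (-δ₀) δ₀ ×ˢ Metric.ball (0 : ℂ) γ₀)
      ∧ ∀ δ : ℝ, 0 < |δ| → |δ| < δ₀ → ∀ γ : ℂ, ‖γ‖ < γ₀ →
          ∃ ν₁ ν₄ : ℂ,
            (∀ ν : ℂ, disp α δ (cStar α δ) (γ ^ 2) (-(etaStar α δ : ℂ) + ν)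
                = -(δ : ℂ) ^ 2 * (ν - ν₁) * (ν - ν₂ δ γ) * (ν - ν₃ δ γ) * (ν - ν₄))
            ∧ ‖ν₁ + (1 / |δ| : ℝ)‖ ≤ C
            ∧ ‖ν₄ - (1 / |δ| : ℝ)‖ ≤ C
            ∧ ‖ν₂ δ γ + γ‖ ≤ C * (|δ| * ‖γ‖ + ‖γ‖ ^ 2)
            ∧ ‖ν₃ δ γ - γ‖ ≤ C * (|δ| * ‖γ‖ + ‖γ‖ ^ 2) := by
  obtain ⟨ν, hνcont, hν⟩ := exists_continuousOn_root_shiftedDisp hα.le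
  set M := α + 1
  have hM : 1 ≤ M := by linarith
  refine ⟨1 / (20 * M), by positivity, ?_, 1 / 20, by norm_num, 4 * M, by positivity,
    fun δ γ => ν δ (-γ), ν, hνcont.comp (continuous_fst.prodMk continuous_snd.neg).continuousOn
      fun p hp => ⟨hp.1, by simpa using hp.2⟩,
    hνcont, fun δ hδ0 hδ γ hγ => ?_⟩
  · rw [lt_one_div (by positivity) (Real.sqrt_pos.2 (by positivity)), one_div_one_div,
      Real.sqrt_lt' (by positivity)]
    nlinarith
  have hδM : M * |δ| ≤ 1 / 20 := by
    rw [lt_div_iff₀ (by positivity)] at hδ; linarith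
  have h12 : 12 * δ ^ 2 * α ≤ 1 := by
    rw [← sq_abs]; nlinarith [abs_nonneg δ]
  obtain ⟨hx, hx₁, hx₂⟩ := hν δ hδ γ hγ
  obtain ⟨hy, hy₁, hy₂⟩ := hν δ hδ (-γ) (by simpa using hγ)
  rw [shiftedDisp_neg] at hy
  rw [sub_neg_eq_add, norm_neg] at hy₁ hy₂
  obtain ⟨ν₁, ν₄, hfac, h₁, h₄⟩ := exists_shiftedDisp_eq_prod (abs_pos.1 hδ0) hM hδM
    (etaStar_nonneg δ) (etaStar_le δ hα.le) hγ.le hx hy hx₂ hy₂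
  have hnear : 2 * M * |δ| * ‖γ‖ ≤ 4 * M * (|δ| * ‖γ‖ + ‖γ‖ ^ 2) := by
    have h0 : 0 ≤ M * |δ| * ‖γ‖ := by positivity
    have h1 : 0 ≤ M * ‖γ‖ ^ 2 := by positivity
    linarith
  exact ⟨ν₁, ν₄, fun ν' => by rw [disp_cStar_eq_shiftedDisp hα.le h12, hfac], h₁, h₄,
    hy₁.trans hnear, hx₁.trans hnear⟩
end

section
/- (Bounds on unstable eigenvalues.) Let δ, c ∈ ℝ, let b : ℝ → ℝ be continuous and bounded, set M := sup_{x∈ℝ}|b(x)|, and let λ ∈ ℂ. Suppose u : ℝ → ℂ is of class C⁴, the functions u, u', u'', u''', u'''' all belong to L²(ℝ), ‖u‖_{L²(ℝ)} = 1, and −δ²u''''(x) + u''(x) + cu'(x) + b(x)u(x) = λu(x) for all x ∈ ℝ. Then Re λ ≤ M and (Im λ)² ≤ c²·(M − Re λ). -/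
/-!
Pairing the eigenvalue equation with `conj u` and integrating by parts gives
`λ = -δ² ‖u″‖² - ‖u′‖² + ∫ b |u|² + c ⟨u′, u⟩`. The pairing `⟨u′, u⟩` is purely imaginary, and by
Cauchy–Schwarz its modulus is at most `‖u′‖`. Real parts give `Re λ ≤ M - ‖u′‖² ≤ M`, and
imaginary parts give `(Im λ)² ≤ c² ‖u′‖² ≤ c² (M - Re λ)`.
-/

open MeasureTheory ComplexConjugate

section L2Pairing

variable {α 𝕜 : Type*} [RCLike 𝕜] {m : MeasurableSpace α} {μ : Measure α} {f g : α → 𝕜}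

theorem MeasureTheory.MemLp.integrable_mul_conj (hf : MemLp f 2 μ) (hg : MemLp g 2 μ) :
    Integrable (fun x => f x * conj (g x)) μ :=
  hf.integrable_mul (q := 2) hg.star

theorem integral_mul_conj_self (f : α → 𝕜) :
    ∫ x, f x * conj (f x) ∂μ = ((∫ x, ‖f x‖ ^ 2 ∂μ : ℝ) : 𝕜) := by
  simp_rw [RCLike.mul_conj, ← RCLike.ofReal_pow]
  exact integral_ofReal

theorem norm_integral_mul_conj_sq_le (hf : MemLp f 2 μ) (hg : MemLp g 2 μ) :
    ‖∫ x, f x * conj (g x) ∂μ‖ ^ 2 ≤ (∫ x, ‖f x‖ ^ 2 ∂μ) * ∫ x, ‖g x‖ ^ 2 ∂μ := by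
  have inner_toLp : ∀ {f g : α → 𝕜} (hf : MemLp f 2 μ) (hg : MemLp g 2 μ),
      inner 𝕜 (hg.toLp g) (hf.toLp f) = ∫ x, f x * conj (g x) ∂μ := by
    intro f g hf hg
    rw [L2.inner_def]
    refine integral_congr_ae ?_
    filter_upwards [hf.coeFn_toLp, hg.coeFn_toLp] with x hfx hgx
    rw [hfx, hgx, RCLike.inner_apply]
  have norm_toLp_sq : ∀ {f : α → 𝕜} (hf : MemLp f 2 μ), ‖hf.toLp f‖ ^ 2 = ∫ x, ‖f x‖ ^ 2 ∂μ := by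
    intro f hf
    rw [norm_sq_eq_re_inner (𝕜 := 𝕜), inner_toLp hf hf, integral_mul_conj_self, RCLike.ofReal_re]
  rw [← norm_toLp_sq hf, ← norm_toLp_sq hg, ← inner_toLp hf hg, ← mul_pow, mul_comm]
  gcongr
  exact norm_inner_le_norm _ _

end L2Pairing

theorem integral_mul_le_of_le {α : Type*} {m : MeasurableSpace α} {μ : Measure α} {g w : α → ℝ}
    {M : ℝ} (hg : ∀ x, g x ≤ M) (hw : ∀ x, 0 ≤ w x) (hgw : Integrable (fun x => g x * w x) μ)
    (hw_int : Integrable w μ) :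
    ∫ x, g x * w x ∂μ ≤ M * ∫ x, w x ∂μ := by
  rw [← integral_const_mul]
  exact integral_mono hgw (hw_int.const_mul M) fun x => mul_le_mul_of_nonneg_right (hg x) (hw x)

section IntegrationByParts

variable {𝕜 : Type*} [RCLike 𝕜] {f g f' g' : ℝ → 𝕜}

theorem integral_deriv_mul_conj_eq_neg
    (hf : ∀ x, HasDerivAt f (f' x) x) (hg : ∀ x, HasDerivAt g (g' x) x)
    (hf₂ : MemLp f 2 volume) (hf'₂ : MemLp f' 2 volume)
    (hg₂ : MemLp g 2 volume) (hg'₂ : MemLp g' 2 volume) :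
    ∫ x, f' x * conj (g x) = -∫ x, f x * conj (g' x) :=
  neg_eq_iff_eq_neg.mp (integral_mul_deriv_eq_deriv_mul_of_integrable (fun x _ => hf x)
    (fun x _ => (hg x).star) (hf₂.integrable_mul_conj hg'₂) (hf'₂.integrable_mul_conj hg₂)
    (hf₂.integrable_mul_conj hg₂)).symm

theorem re_integral_deriv_mul_conj_self_eq_zero (hf : ∀ x, HasDerivAt f (f' x) x)
    (hf₂ : MemLp f 2 volume) (hf'₂ : MemLp f' 2 volume) :
    RCLike.re (∫ x, f' x * conj (f x)) = 0 := by
  have h := integral_deriv_mul_conj_eq_neg hf hf hf₂ hf'₂ hf₂ hf'₂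
  have hconj : ∫ x, f x * conj (f' x) = conj (∫ x, f' x * conj (f x)) := by
    rw [← integral_conj]
    simp_rw [map_mul, RCLike.conj_conj, mul_comm]
  rw [hconj] at h
  have := congrArg RCLike.re h
  rw [map_neg, RCLike.conj_re] at this
  linarith

end IntegrationByParts

section IteratedDeriv

variable {𝕜 : Type*} [RCLike 𝕜] {n : ℕ} {u : ℝ → 𝕜}

theorem ContDiff.hasDerivAt_iteratedDeriv (hu : ContDiff ℝ n u) {i : ℕ} (hi : i < n) (x : ℝ) :
    HasDerivAt (iteratedDeriv i u) (iteratedDeriv (i + 1) u x) x := by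
  rw [iteratedDeriv_succ]
  exact (hu.differentiable_iteratedDeriv i (mod_cast hi) x).hasDerivAt

theorem integral_iteratedDeriv_succ_mul_conj (hu : ContDiff ℝ n u)
    (hL2 : ∀ j ≤ n, MemLp (iteratedDeriv j u) 2 volume) {i j : ℕ} (hi : i < n) (hj : j < n) :
    ∫ x, iteratedDeriv (i + 1) u x * conj (iteratedDeriv j u x)
      = -∫ x, iteratedDeriv i u x * conj (iteratedDeriv (j + 1) u x) :=
  integral_deriv_mul_conj_eq_neg (hu.hasDerivAt_iteratedDeriv hi) (hu.hasDerivAt_iteratedDeriv hj)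
    (hL2 i hi.le) (hL2 (i + 1) hi) (hL2 j hj.le) (hL2 (j + 1) hj)

theorem integral_iteratedDeriv_two_mul_conj (hu : ContDiff ℝ n u)
    (hL2 : ∀ j ≤ n, MemLp (iteratedDeriv j u) 2 volume) (hn : 2 ≤ n) :
    ∫ x, iteratedDeriv 2 u x * conj (u x) = -((∫ x, ‖deriv u x‖ ^ 2 : ℝ) : 𝕜) := by
  have h₁₀ := integral_iteratedDeriv_succ_mul_conj hu hL2 (i := 1) (j := 0) hn (by omega)
  simp only [iteratedDeriv_zero, iteratedDeriv_one, Nat.reduceAdd] at h₁₀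
  rw [h₁₀, integral_mul_conj_self]

theorem integral_iteratedDeriv_four_mul_conj (hu : ContDiff ℝ n u)
    (hL2 : ∀ j ≤ n, MemLp (iteratedDeriv j u) 2 volume) (hn : 4 ≤ n) :
    ∫ x, iteratedDeriv 4 u x * conj (u x) = ((∫ x, ‖iteratedDeriv 2 u x‖ ^ 2 : ℝ) : 𝕜) := by
  have h₃₀ := integral_iteratedDeriv_succ_mul_conj hu hL2 (i := 3) (j := 0) hn (by omega)
  have h₂₁ := integral_iteratedDeriv_succ_mul_conj hu hL2 (i := 2) (j := 1) (by omega) (by omega)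
  simp only [iteratedDeriv_zero, Nat.reduceAdd] at h₃₀ h₂₁
  rw [h₃₀, h₂₁, neg_neg, integral_mul_conj_self]

end IteratedDeriv

theorem eigenvalue_eq_energy {δ c : ℝ} {b : ℝ → ℝ} {lam : ℂ} {u : ℝ → ℂ} (hu : ContDiff ℝ 4 u)
    (hL2 : ∀ j ≤ 4, MemLp (iteratedDeriv j u) 2 volume) (hnorm : ∫ x, ‖u x‖ ^ 2 = 1)
    (hbu : Integrable (fun x => b x * ‖u x‖ ^ 2))
    (hode : ∀ x, -(δ : ℂ) ^ 2 * iteratedDeriv 4 u x + iteratedDeriv 2 u x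
      + (c : ℂ) * deriv u x + (b x : ℂ) * u x = lam * u x) :
    lam = ((-δ ^ 2 * ∫ x, ‖iteratedDeriv 2 u x‖ ^ 2) - (∫ x, ‖deriv u x‖ ^ 2)
        + ∫ x, b x * ‖u x‖ ^ 2 : ℝ) + c * ∫ x, deriv u x * conj (u x) := by
  -- Restated with `Complex.ofReal` in place of `RCLike.ofReal`, which `ring` sees as another atom.
  have h₄ : ∫ x, iteratedDeriv 4 u x * conj (u x) = ((∫ x, ‖iteratedDeriv 2 u x‖ ^ 2 : ℝ) : ℂ) :=
    integral_iteratedDeriv_four_mul_conj (n := 4) hu hL2 le_rfl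
  have h₂ : ∫ x, iteratedDeriv 2 u x * conj (u x) = -((∫ x, ‖deriv u x‖ ^ 2 : ℝ) : ℂ) :=
    integral_iteratedDeriv_two_mul_conj (n := 4) hu hL2 (by norm_num)
  have hu₀ : MemLp u 2 volume := by simpa using hL2 0 (by norm_num)
  have hu₁ : MemLp (deriv u) 2 volume := by simpa using hL2 1 (by norm_num)
  have hpair : ∀ x, lam * (u x * conj (u x)) = -(δ : ℂ) ^ 2 * (iteratedDeriv 4 u x * conj (u x))
      + iteratedDeriv 2 u x * conj (u x) + c * (deriv u x * conj (u x))
      + ((b x * ‖u x‖ ^ 2 : ℝ) : ℂ) := by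
    intro x
    push_cast
    linear_combination (-conj (u x)) * hode x + (b x : ℂ) * Complex.mul_conj' (u x)
  calc lam = ∫ x, lam * (u x * conj (u x)) := by
        rw [integral_const_mul, integral_mul_conj_self, hnorm]
        simp
    _ = ∫ x, (-(δ : ℂ) ^ 2 * (iteratedDeriv 4 u x * conj (u x))
      + iteratedDeriv 2 u x * conj (u x) + c * (deriv u x * conj (u x))
      + ((b x * ‖u x‖ ^ 2 : ℝ) : ℂ)) := by simp_rw [hpair]
    _ = -(δ : ℂ) ^ 2 * (∫ x, iteratedDeriv 4 u x * conj (u x))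
      + (∫ x, iteratedDeriv 2 u x * conj (u x)) + c * (∫ x, deriv u x * conj (u x))
      + ((∫ x, b x * ‖u x‖ ^ 2 : ℝ) : ℂ) := by
        have i₄ := ((hL2 4 le_rfl).integrable_mul_conj hu₀).const_mul (-(δ : ℂ) ^ 2)
        have i₂ := (hL2 2 (by norm_num)).integrable_mul_conj hu₀
        have i₁ := (hu₁.integrable_mul_conj hu₀).const_mul (c : ℂ)
        rw [integral_add ?_ hbu.ofReal, integral_add ?_ i₁, integral_add i₄ i₂,
          integral_const_mul, integral_const_mul, integral_complex_ofReal]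
        exacts [i₄.add i₂, (i₄.add i₂).add i₁]
    _ = _ := by rw [h₄, h₂]; push_cast; ring

theorem stmt12 (δ c : ℝ) (b : ℝ → ℝ) (hb : Continuous b) (M : ℝ)
    (hM : IsLUB (Set.range fun x => |b x|) M)
    (lam : ℂ) (u : ℝ → ℂ) (hu : ContDiff ℝ 4 u)
    (hL2 : ∀ j ≤ 4, MemLp (iteratedDeriv j u) 2 volume)
    (hnorm : ∫ x : ℝ, ‖u x‖ ^ 2 = 1)
    (hode : ∀ x : ℝ,
      -(δ : ℂ) ^ 2 * iteratedDeriv 4 u x + iteratedDeriv 2 u x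
          + (c : ℂ) * deriv u x + (b x : ℂ) * u x = lam * u x) :
    lam.re ≤ M ∧ lam.im ^ 2 ≤ c ^ 2 * (M - lam.re) := by
  have hbM : ∀ x, |b x| ≤ M := fun x => hM.1 ⟨x, rfl⟩
  have hu₀ : MemLp u 2 volume := by simpa using hL2 0 (by norm_num)
  have hu₁ : MemLp (deriv u) 2 volume := by simpa using hL2 1 (by norm_num)
  have hu₀_sq : Integrable (fun x => ‖u x‖ ^ 2) := (memLp_two_iff_integrable_sq_norm hu₀.1).1 hu₀
  have hbu : Integrable (fun x => b x * ‖u x‖ ^ 2) :=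
    hu₀_sq.bdd_mul hb.aestronglyMeasurable (ae_of_all _ hbM)
  set P := ∫ x, deriv u x * conj (u x)
  set I₁ := ∫ x, ‖deriv u x‖ ^ 2
  set I₂ := ∫ x, ‖iteratedDeriv 2 u x‖ ^ 2
  set B := ∫ x, b x * ‖u x‖ ^ 2
  have hlam : lam = ((-δ ^ 2 * I₂ - I₁ + B : ℝ) : ℂ) + c * P :=
    eigenvalue_eq_energy hu hL2 hnorm hbu hode
  have hP_re : P.re = 0 := re_integral_deriv_mul_conj_self_eq_zero
    (fun x => (hu.differentiable (by norm_num) x).hasDerivAt) hu₀ hu₁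
  have hP_im : P.im ^ 2 ≤ I₁ := by
    have h := norm_integral_mul_conj_sq_le hu₁ hu₀
    rw [hnorm, mul_one] at h
    nlinarith [Complex.abs_im_le_norm P, abs_nonneg P.im, sq_abs P.im]
  have hB : B ≤ M := by
    simpa [hnorm] using integral_mul_le_of_le (fun x => (le_abs_self _).trans (hbM x))
      (fun x => by positivity) hbu hu₀_sq
  have hre : lam.re = -δ ^ 2 * I₂ - I₁ + B := by
    rw [hlam, Complex.add_re, Complex.ofReal_re, Complex.re_ofReal_mul, hP_re, mul_zero, add_zero]
  have him : lam.im = c * P.im := by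
    rw [hlam, Complex.add_im, Complex.ofReal_im, Complex.im_ofReal_mul, zero_add]
  have hI₁ : 0 ≤ I₁ := integral_nonneg fun x => by positivity
  have hI₂ : 0 ≤ I₂ := integral_nonneg fun x => by positivity
  refine ⟨by nlinarith, ?_⟩
  rw [him, mul_pow]
  exact mul_le_mul_of_nonneg_left (hP_im.trans (by nlinarith)) (sq_nonneg c)
end
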